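/- For functors θ : C^n ⥤ C and θᵢ : C^{kᵢ} ⥤ C (i = 1,…,n), there is a natural isomorphism (θ ∘ (θ₁,…,θₙ))_D ≅ θ_D ∘ (θ₁_D, …, θₙ_D) between functors [C ⥤ Type]^{k₁+⋯+kₙ} ⥤ [C ⥤ Type], where ∘ denotes multi-composition of multi-ary functors. -/

import Mathlib

open CategoryTheory Opposite

universe u v

namespace DayPaper

variable {B C : Type} [SmallCategory B] [SmallCategory C]

/-- A point of the coend defining the Day extension (left Kan extension) of a
copresheaf `P` along `θ`, at `c`. -/
structure DayPt (θ : B ⥤ C) (P : B ⥤ Type) (c : C) : Type where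
  pt : B
  elt : P.obj pt
  arr : θ.obj pt ⟶ c

/-- The relation generating the coend quotient. -/
def DayRel (θ : B ⥤ C) (P : B ⥤ Type) (c : C) : DayPt θ P c → DayPt θ P c → Prop :=
  fun x y => ∃ f : x.pt ⟶ y.pt, P.map f x.elt = y.elt ∧ x.arr = θ.map f ≫ y.arr

/-- The coend `∫^{b} P(b) × Hom(θ b, c)`. -/
def DayObj (θ : B ⥤ C) (P : B ⥤ Type) (c : C) : Type := Quot (DayRel θ P c)

/-- The Day extension of a copresheaf `P` along `θ`, as a copresheaf on `C`. -/
def DayCopresheaf (θ : B ⥤ C) (P : B ⥤ Type) : C ⥤ Type where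
  obj c := DayObj θ P c
  map {c c'} g := TypeCat.ofHom (Quot.map (fun (x : DayPt θ P c) => (⟨x.pt, x.elt, x.arr ≫ g⟩ : DayPt θ P c'))
    (by rintro x y ⟨f, h1, h2⟩; exact ⟨f, h1, by dsimp; rw [h2, Category.assoc]⟩))
  map_id c := by
    ext (q : DayObj θ P c)
    induction q using Quot.ind with
    | _ x => exact congrArg (Quot.mk _) (by rcases x with ⟨b, p, a⟩; simp)
  map_comp {c c' c''} g g' := by
    ext (q : DayObj θ P c)
    induction q using Quot.ind with
    | _ x => exact congrArg (Quot.mk _) (by rcases x with ⟨b, p, a⟩; simp)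

/-- The Day extension, as a functor on copresheaf categories. -/
def DayExtGen (θ : B ⥤ C) : (B ⥤ Type) ⥤ (C ⥤ Type) where
  obj P := DayCopresheaf θ P
  map {P Q} η :=
    { app := fun c => TypeCat.ofHom (Quot.map
          (fun (x : DayPt θ P c) => (⟨x.pt, η.app x.pt x.elt, x.arr⟩ : DayPt θ Q c))
        (by
          rintro x y ⟨f, h1, h2⟩
          exact ⟨f, by dsimp; rw [← h1, FunctorToTypes.naturality], h2⟩))
      naturality := by
        intro c c' g
        ext (q : DayObj θ P c)
        induction q using Quot.ind with
        | _ x => rfl }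
  map_id P := by
    ext c (q : DayObj θ P c)
    induction q using Quot.ind with
    | _ x => rfl
  map_comp {P Q R} η η' := by
    ext c (q : DayObj θ P c)
    induction q using Quot.ind with
    | _ x => rfl

variable {ι : Type}

/-- The external product of a family of copresheaves. -/
def extProd (F : ι → (C ⥤ Type)) : (ι → C) ⥤ Type where
  obj x := ∀ i, (F i).obj (x i)
  map f := TypeCat.ofHom fun p => fun i => (F i).map (f i) (p i)
  map_id x := by ext p i; simp
  map_comp f g := by ext p i; simp

/-- The external product, as a functor. -/
def extProdFunctor (ι : Type) (C : Type) [SmallCategory C] :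
    (ι → (C ⥤ Type)) ⥤ ((ι → C) ⥤ Type) where
  obj := extProd
  map {F G} α :=
    { app := fun x => TypeCat.ofHom fun p => fun i => (α i).app (x i) (p i)
      naturality := by
        intro x y f
        ext p
        funext i
        exact NatTrans.naturality_apply (α i) (f i) (p i) }
  map_id F := by ext x p; rfl
  map_comp α β := by ext x p; rfl

/-- Reindexing of pi-categories along a map of index types. -/
def reindexPi {A : Type u} [Category.{v} A] {ι' ι : Type} (h : ι' → ι) :
    (ι → A) ⥤ (ι' → A) where
  obj x := fun i' => x (h i')
  map f := fun i' => f (h i')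
  map_id _x := rfl
  map_comp _f _g := rfl

/-- The tuple `(θ₁, …, θₙ)` of a family of multi-ary operations. -/
def tupleFunctor {κ : ι → Type} (θs : ∀ i, (κ i → C) ⥤ C) :
    ((Σ i, κ i) → C) ⥤ (ι → C) where
  obj x := fun i => (θs i).obj (fun s => x ⟨i, s⟩)
  map f := fun i => (θs i).map (fun s => f ⟨i, s⟩)
  map_id x := by funext i; exact (θs i).map_id _
  map_comp f g := by funext i; exact (θs i).map_comp _ _

/-- Multi-composition of multi-ary operations on `C`. -/
def mc {κ : ι → Type} (θ : (ι → C) ⥤ C) (θs : ∀ i, (κ i → C) ⥤ C) :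
    ((Σ i, κ i) → C) ⥤ C :=
  tupleFunctor θs ⋙ θ

/-- The Day extension of a (total) `ι`-ary operation. -/
def DayExtFunctor (θ : (ι → C) ⥤ C) : (ι → (C ⥤ Type)) ⥤ (C ⥤ Type) :=
  extProdFunctor ι C ⋙ DayExtGen θ

end DayPaper

open DayPaper CategoryTheory

/-!
The Day extension along `θ` is the left Kan extension along `θ`, computed by its coend formula,
and `θ ∘ (θ₁,…,θₙ)` is `(θ₁,…,θₙ) ⋙ θ`. Left Kan extensions compose, so it suffices to see that
the extension of an external product `F₁ ⊠ ⋯ ⊠ Fₘ` along the tuple functor `(θ₁,…,θₙ)` is the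
external product of the extensions along the `θᵢ`. Since a hom-set of a product category is a
product of hom-sets, this amounts to a finite product of coends in `Type` being the coend of the
product, i.e. to a finite product of quotients being the quotient of the product: two tuples
whose coordinates are identified can be connected by changing one coordinate at a time.
-/

namespace Quot

variable {ι : Type*} {α : ι → Type*} {r : ∀ i, α i → α i → Prop}

theorem mk_update_eq_mk_update [∀ i, Std.Refl (r i)] [DecidableEq ι] (z : ∀ i, α i)
    (j : ι) {a b : α j} (h : Quot.mk (r j) a = Quot.mk (r j) b) :
    Quot.mk (fun x y : ∀ i, α i => ∀ i, r i (x i) (y i)) (Function.update z j a)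
      = Quot.mk _ (Function.update z j b) := by
  refine congrArg (Quot.lift (fun c => Quot.mk _ (Function.update z j c)) fun c d hcd => ?_) h
  refine Quot.sound fun i => ?_
  rcases eq_or_ne i j with rfl | hij
  · simpa using hcd
  · simpa [Function.update_of_ne hij] using refl (z i)

theorem mk_pi_eq_of_forall_mk_eq [Finite ι] [∀ i, Std.Refl (r i)] {x y : ∀ i, α i}
    (h : ∀ i, Quot.mk (r i) (x i) = Quot.mk (r i) (y i)) :
    Quot.mk (fun x y : ∀ i, α i => ∀ i, r i (x i) (y i)) x = Quot.mk _ y := by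
  classical
  have := Fintype.ofFinite ι
  suffices ∀ s : Finset ι, Quot.mk (fun x y : ∀ i, α i => ∀ i, r i (x i) (y i)) x
      = Quot.mk _ (s.piecewise y x) by
    simpa using this Finset.univ
  intro s
  induction s using Finset.induction with
  | empty => simp
  | insert j s hj ih =>
    rw [ih, Finset.piecewise_insert]
    conv_lhs => rw [← Function.update_eq_self j (s.piecewise y x), s.piecewise_eq_of_notMem _ _ hj]
    exact mk_update_eq_mk_update _ j (h j)

noncomputable def piEquiv [Finite ι] [∀ i, Std.Refl (r i)] :
    Quot (fun x y : ∀ i, α i => ∀ i, r i (x i) (y i)) ≃ ∀ i, Quot (r i) where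
  toFun := Quot.lift (fun x i => Quot.mk _ (x i)) fun _ _ h => funext fun i => Quot.sound (h i)
  invFun q := Quot.mk _ fun i => (q i).out
  left_inv := Quot.ind fun _ => mk_pi_eq_of_forall_mk_eq fun _ => Quot.out_eq _
  right_inv q := funext fun i => Quot.out_eq (q i)

end Quot

namespace DayPaper

variable {A B C : Type} [SmallCategory A] [SmallCategory B] [SmallCategory C]

instance (θ : B ⥤ C) (P : B ⥤ Type) (c : C) : Std.Refl (DayRel θ P c) where
  refl _ := ⟨𝟙 _, by simp, by simp⟩

section Comp

variable (G : A ⥤ B) (θ : B ⥤ C) (P : A ⥤ Type)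

def dayObjCompEquiv (c : C) : DayObj (G ⋙ θ) P c ≃ DayObj θ (DayCopresheaf G P) c where
  toFun := Quot.map (fun x => ⟨G.obj x.pt, Quot.mk _ ⟨x.pt, x.elt, 𝟙 _⟩, x.arr⟩) <| by
    rintro x y ⟨f, hf, harr⟩
    exact ⟨G.map f, Quot.sound ⟨f, hf, by simp⟩, harr⟩
  invFun := Quot.lift
    (fun y => Quot.lift (fun z : DayPt G P y.pt => Quot.mk _ ⟨z.pt, z.elt, θ.map z.arr ≫ y.arr⟩)
      (by
        rintro z w ⟨f, hf, harr⟩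
        exact Quot.sound ⟨f, hf, by simp [harr]⟩) y.elt)
    (by
      rintro ⟨b, e, a⟩ ⟨b', _, a'⟩ ⟨f, hf, harr⟩
      dsimp only at f hf harr ⊢
      rw [← hf, harr]
      induction e using Quot.ind with
      | mk z => exact congrArg (Quot.mk _) (by simp))
  left_inv := Quot.ind fun x => congrArg (Quot.mk _) (by simp)
  right_inv := Quot.ind fun y => by
    obtain ⟨b, e, a⟩ := y
    induction e using Quot.ind with
    | mk z => exact Quot.sound ⟨z.arr, congrArg (Quot.mk _) (by simp), by simp⟩

def dayExtGenCompIso : DayExtGen (G ⋙ θ) ≅ DayExtGen G ⋙ DayExtGen θ :=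
  NatIso.ofComponents
    (fun P => NatIso.ofComponents (fun c => (dayObjCompEquiv G θ P c).toIso)
      fun _ => by ext x; induction x using Quot.ind; rfl)
    fun _ => by ext c x; induction x using Quot.ind; rfl

end Comp

section Tuple

variable {ι : Type} {κ : ι → Type} (θs : ∀ i, (κ i → C) ⥤ C) (F : (Σ i, κ i) → (C ⥤ Type))

def dayPtTupleEquiv (p : ι → C) :
    DayPt (tupleFunctor θs) (extProd F) p ≃
      ∀ i, DayPt (θs i) (extProd fun s => F ⟨i, s⟩) (p i) where
  toFun x i := ⟨fun s => x.pt ⟨i, s⟩, fun s => x.elt ⟨i, s⟩, x.arr i⟩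
  invFun y := ⟨fun js => (y js.1).pt js.2, fun js => (y js.1).elt js.2, fun i => (y i).arr⟩
  left_inv _ := rfl
  right_inv _ := rfl

theorem dayRel_tupleFunctor_iff (p : ι → C) (x y : DayPt (tupleFunctor θs) (extProd F) p) :
    DayRel (tupleFunctor θs) (extProd F) p x y ↔
      ∀ i, DayRel (θs i) _ (p i) (dayPtTupleEquiv θs F p x i) (dayPtTupleEquiv θs F p y i) := by
  constructor
  · rintro ⟨f, hf, harr⟩ i
    exact ⟨fun s => f ⟨i, s⟩, funext fun s => congrFun hf ⟨i, s⟩, congrFun harr i⟩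
  · intro h
    choose f hf harr using h
    exact ⟨fun js => f js.1 js.2, funext fun js => congrFun (hf js.1) js.2, funext harr⟩

noncomputable def dayObjTupleEquiv [Finite ι] (p : ι → C) :
    DayObj (tupleFunctor θs) (extProd F) p ≃
      ∀ i, DayObj (θs i) (extProd fun s => F ⟨i, s⟩) (p i) :=
  (Quot.congr (dayPtTupleEquiv θs F p) (dayRel_tupleFunctor_iff θs F p)).trans Quot.piEquiv

noncomputable def dayExtGenTupleIso [Finite ι] :
    extProdFunctor (Σ i, κ i) C ⋙ DayExtGen (tupleFunctor θs) ≅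
      Functor.pi' (fun i => reindexPi (Sigma.mk i) ⋙ DayExtFunctor (θs i)) ⋙ extProdFunctor ι C :=
  NatIso.ofComponents
    (fun F => NatIso.ofComponents (fun p => (dayObjTupleEquiv θs F p).toIso)
      fun _ => by ext x; induction x using Quot.ind; rfl)
    fun _ => by ext p x; induction x using Quot.ind; rfl

end Tuple

end DayPaper

/-- For `θ : C^n ⥤ C` and `θᵢ : C^{kᵢ} ⥤ C`, the Day extension of the
multi-composite `θ ∘ (θ₁,…,θₙ)` is naturally isomorphic to the multi-composite
of the Day extensions, as functors `[C ⥤ Type]^{k₁+⋯+kₙ} ⥤ [C ⥤ Type]`. -/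
theorem dayExtension_multicomposite (C : Type) [SmallCategory C] (n : ℕ)
    (κ : Fin n → ℕ) (θ : (Fin n → C) ⥤ C) (θs : ∀ i, (Fin (κ i) → C) ⥤ C) :
    Nonempty (DayExtFunctor (mc θ θs) ≅
      (Functor.pi' fun i => reindexPi (Sigma.mk i) ⋙ DayExtFunctor (θs i)) ⋙
        DayExtFunctor θ) :=
  ⟨Functor.isoWhiskerLeft _ (dayExtGenCompIso (tupleFunctor θs) θ) ≪≫
    (Functor.associator _ _ _).symm ≪≫
    Functor.isoWhiskerRight (dayExtGenTupleIso θs) (DayExtGen θ) ≪≫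
    Functor.associator _ _ _⟩
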